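/- arXiv:1203.5422 — 3 statements merged into one kernel-verified Lean document; each statement's English description precedes it below -/
import Mathlib

section
/- If random variables (σ_1, ..., σ_{n+1}) are exchangeable, then for any α ∈ (0,1), the probability that the rank statistic π = (1/(n+1)) · #{j : σ_j ≤ σ_{n+1}} satisfies π ≥ ⌊(n+1)α⌋/(n+1) is at least 1 − α. -/
/-!
Write `rank x i = #{j | x j ≤ x i}`. For any fixed `x`, at most `m` indices have rank `≤ m`: the
one among them with the largest value already sees all of them below it. Summing over `i`, the
events `{rank i ≤ m}` have total probability at most `m`, and exchangeability makes them
equiprobable, so `P(rank (n+1) ≤ m) ≤ m / (n+1)`. Taking `m = ⌊(n+1)α⌋` bounds the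
complementary event `{rank (n+1) < ⌊(n+1)α⌋}` by `α`.
-/

open MeasureTheory Finset

theorem MeasureTheory.sum_measure_le_of_forall_card_mem_le {Ω ι : Type*} [MeasurableSpace Ω]
    [Fintype ι] (μ : Measure Ω) {s : ι → Set Ω} [∀ ω, DecidablePred (ω ∈ s ·)]
    (hs : ∀ i, MeasurableSet (s i)) {m : ℕ} (h : ∀ ω, #{i | ω ∈ s i} ≤ m) : ∑ i, μ (s i) ≤ m * μ Set.univ := by
  calc ∑ i, μ (s i) = ∑ i, ∫⁻ ω, (s i).indicator 1 ω ∂μ := by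
        simp only [lintegral_indicator_one (hs _)]
    _ = ∫⁻ ω, ∑ i, (s i).indicator 1 ω ∂μ :=
        (lintegral_finsetSum _ fun i _ => measurable_one.indicator (hs i)).symm
    _ ≤ ∫⁻ _, (m : ENNReal) ∂μ := lintegral_mono fun ω => by
        simp only [Set.indicator_apply, Pi.one_apply, sum_boole]
        exact_mod_cast h ω
    _ = m * μ Set.univ := lintegral_const _

namespace RankStatistic

section Rank

variable {ι α : Type*} [Fintype ι] [LinearOrder α]

def rank (x : ι → α) (i : ι) : ℕ := #{j | x j ≤ x i}

theorem card_rank_le (x : ι → α) (m : ℕ) : #{i | rank x i ≤ m} ≤ m := by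
  rcases (univ.filter fun i => rank x i ≤ m).eq_empty_or_nonempty with h | h
  · simp [h]
  obtain ⟨i, hi, hmax⟩ := exists_max_image _ x h
  calc #{i | rank x i ≤ m} ≤ rank x i :=
        card_le_card fun j hj => mem_filter.mpr ⟨mem_univ j, hmax j hj⟩
    _ ≤ m := (mem_filter.mp hi).2

theorem rank_comp_perm (x : ι → α) (e : Equiv.Perm ι) (i : ι) :
    rank (x ∘ e) i = rank x (e i) :=
  card_bij' (fun j _ => e j) (fun j _ => e.symm j) (by simp) (by simp) (by simp) (by simp)

end Rank

section Exchangeable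

variable {ι α : Type*} [Fintype ι] [LinearOrder α] [TopologicalSpace α] [MeasurableSpace α]
  [OpensMeasurableSpace α] [OrderClosedTopology α] [SecondCountableTopology α]

def IsExchangeable (μ : Measure (ι → α)) : Prop :=
  ∀ e : Equiv.Perm ι, μ.map (fun x => x ∘ e) = μ

theorem measurable_rank (i : ι) : Measurable fun x : ι → α => rank x i := by
  simp_rw [rank, card_filter]
  exact Finset.measurable_sum _ fun j _ => Measurable.ite
    (measurableSet_le (measurable_pi_apply j) (measurable_pi_apply i)) measurable_const
    measurable_const

theorem IsExchangeable.measure_rank_le_eq {μ : Measure (ι → α)} (hμ : IsExchangeable μ)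
    (m : ℕ) (i j : ι) : μ {x | rank x i ≤ m} = μ {x | rank x j ≤ m} := by
  classical
  set e := Equiv.swap j i
  have hpre : {x : ι → α | rank x i ≤ m} = (fun x => x ∘ e) ⁻¹' {x | rank x j ≤ m} := by
    ext x
    simp [rank_comp_perm, e]
  have hmeas : MeasurableSet {x : ι → α | rank x j ≤ m} := measurable_rank j measurableSet_Iic
  rw [hpre, ← Measure.map_apply (by fun_prop) hmeas, hμ e]

theorem IsExchangeable.card_mul_measure_rank_le {μ : Measure (ι → α)} (hμ : IsExchangeable μ)
    (i : ι) (m : ℕ) : Fintype.card ι * μ {x | rank x i ≤ m} ≤ m * μ Set.univ :=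
  calc Fintype.card ι * μ {x | rank x i ≤ m} = ∑ j, μ {x | rank x j ≤ m} := by
        simp [hμ.measure_rank_le_eq m _ i]
    _ ≤ m * μ Set.univ :=
        sum_measure_le_of_forall_card_mem_le μ (s := fun j => {x | rank x j ≤ m})
          (fun j => measurable_rank j measurableSet_Iic) (card_rank_le · m)

theorem IsExchangeable.ofReal_one_sub_le_measure_floor_le_rank {μ : Measure (ι → α)}
    [IsProbabilityMeasure μ] (hμ : IsExchangeable μ) (i : ι) {a : ℝ} (ha : 0 ≤ a) :
    ENNReal.ofReal (1 - a) ≤ μ {x | ⌊Fintype.card ι * a⌋₊ ≤ rank x i} := by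
  set k := ⌊Fintype.card ι * a⌋₊
  have hcard : 0 < Fintype.card ι := Fintype.card_pos_iff.mpr ⟨i⟩
  have hcard' : (0 : ℝ) < Fintype.card ι := by exact_mod_cast hcard
  have hk : μ {x | rank x i ≤ k} ≤ ENNReal.ofReal a :=
    calc μ {x | rank x i ≤ k} ≤ k / Fintype.card ι := by
          rw [ENNReal.le_div_iff_mul_le (.inl (by simp [hcard.ne'])) (.inl (by simp)), mul_comm]
          simpa using hμ.card_mul_measure_rank_le i k
      _ = ENNReal.ofReal (k / Fintype.card ι) := by
          rw [ENNReal.ofReal_div_of_pos hcard', ENNReal.ofReal_natCast, ENNReal.ofReal_natCast]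
      _ ≤ ENNReal.ofReal a := ENNReal.ofReal_le_ofReal <|
          (div_le_iff₀' hcard').mpr (Nat.floor_le (by positivity))
  calc ENNReal.ofReal (1 - a) = 1 - ENNReal.ofReal a := by
        rw [ENNReal.ofReal_sub _ ha, ENNReal.ofReal_one]
    _ ≤ 1 - μ {x | rank x i < k} :=
        tsub_le_tsub_left ((measure_mono fun x (hx : rank x i < k) => hx.le).trans hk) 1
    _ = μ {x | k ≤ rank x i} := by
        have hmeas : MeasurableSet {x : ι → α | rank x i < k} := measurable_rank i measurableSet_Iio
        rw [← prob_compl_eq_one_sub hmeas]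
        simp [Set.compl_ofPred]

end Exchangeable

end RankStatistic

open RankStatistic

/-- If `(σ_1, ..., σ_{n+1})` are exchangeable real random variables, then for any
`α ∈ (0,1)`, the normalized rank `π = (1/(n+1)) · #{j : σ_j ≤ σ_{n+1}}` satisfies
`P(π ≥ ⌊(n+1)α⌋/(n+1)) ≥ 1 − α`. -/
theorem rank_statistic_subuniform
    {Ω : Type*} [MeasurableSpace Ω] (P : Measure Ω) [IsProbabilityMeasure P]
    (n : ℕ) (σ : Fin (n + 1) → Ω → ℝ) (hmeas : ∀ i, Measurable (σ i))
    (hexch : ∀ e : Equiv.Perm (Fin (n + 1)),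
      Measure.map (fun ω => fun i => σ (e i) ω) P
        = Measure.map (fun ω => fun i => σ i ω) P)
    (α : ℝ) (hα : α ∈ Set.Ioo (0 : ℝ) 1) :
    ENNReal.ofReal (1 - α) ≤
      P {ω | ((⌊((n : ℝ) + 1) * α⌋ : ℝ) / ((n : ℝ) + 1)) ≤
        ((Finset.univ.filter (fun j : Fin (n + 1) => σ j ω ≤ σ (Fin.last n) ω)).card : ℝ)
          / ((n : ℝ) + 1)} := by
  have hα0 : 0 ≤ α := hα.1.le
  set X : Ω → Fin (n + 1) → ℝ := fun ω i => σ i ω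
  have hX : Measurable X := measurable_pi_lambda X hmeas
  have : IsProbabilityMeasure (P.map X) := Measure.isProbabilityMeasure_map hX.aemeasurable
  have hμ : IsExchangeable (P.map X) := fun e => by
    rw [Measure.map_map (by fun_prop) hX]
    exact hexch e
  have hmeas_event : MeasurableSet
      {x : Fin (n + 1) → ℝ | ⌊Fintype.card (Fin (n + 1)) * α⌋₊ ≤ rank x (Fin.last n)} :=
    measurable_rank _ measurableSet_Ici
  calc ENNReal.ofReal (1 - α)
      ≤ P.map X {x | ⌊Fintype.card (Fin (n + 1)) * α⌋₊ ≤ rank x (Fin.last n)} :=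
        hμ.ofReal_one_sub_le_measure_floor_le_rank _ hα0
    _ = _ := by
        rw [Measure.map_apply hX hmeas_event]
        congr 1
        ext ω
        -- the event uses the integer floor, which agrees with `⌊·⌋₊` as `(n + 1) * α ≥ 0`
        simp [div_le_div_iff_of_pos_right (by positivity : (0 : ℝ) < n + 1),
          ← natCast_floor_eq_intCast_floor (by positivity : 0 ≤ ((n : ℝ) + 1) * α), rank, X]
end

section
/- If the total variation distance between probability measures P and Q is at most ε_n = 2[1 − (1 − ε²/8)^{1/n}], then the total variation distance between the n-fold product measures P^n and Q^n is at most ε. -/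
/-!
Total variation bounds add up under products: `μ ⊗ μ'` and `ν ⊗ ν'` are compared through
`μ ⊗ ν'`, integrating the bound on the sections of a set (Fubini).
Hence `TV(Pⁿ, Qⁿ) ≤ n ε_n`, and with `y = 1 - ε²/8` the estimate
`n (1 - y^{1/n}) ≤ -log y ≤ 1/y - 1` gives `n ε_n ≤ 2ε²/(8 - ε²) ≤ ε`.
-/

open MeasureTheory

namespace MeasureTheory.Measure

variable {α β : Type*} [MeasurableSpace α] [MeasurableSpace β]

def TVBound (μ ν : Measure α) (δ : ℝ) : Prop :=
  ∀ A : Set α, MeasurableSet A → |(μ A).toReal - (ν A).toReal| ≤ δ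

lemma TVBound.trans {μ ν ρ : Measure α} {δ δ' : ℝ} (h₁ : TVBound μ ν δ)
    (h₂ : TVBound ν ρ δ') : TVBound μ ρ (δ + δ') := fun A hA =>
  (abs_sub_le _ _ _).trans (add_le_add (h₁ A hA) (h₂ A hA))

lemma TVBound.map {μ ν : Measure α} {δ : ℝ} (h : TVBound μ ν δ) {f : α → β}
    (hf : Measurable f) : TVBound (μ.map f) (ν.map f) δ := fun A hA => by
  rw [map_apply hf hA, map_apply hf hA]
  exact h _ (hf hA)

lemma abs_toReal_lintegral_sub_le (μ : Measure α) [IsProbabilityMeasure μ] {f g : α → ENNReal}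
    (hf : Measurable f) (hg : Measurable g) (hf1 : ∀ x, f x ≤ 1) (hg1 : ∀ x, g x ≤ 1) {c : ℝ}
    (h : ∀ x, |(f x).toReal - (g x).toReal| ≤ c) :
    |(∫⁻ x, f x ∂μ).toReal - (∫⁻ x, g x ∂μ).toReal| ≤ c := by
  have lt_top {k : α → ENNReal} (hk : ∀ x, k x ≤ 1) : ∀ᵐ x ∂μ, k x < ⊤ :=
    .of_forall fun x => (hk x).trans_lt ENNReal.one_lt_top
  have integrable {k : α → ENNReal} (hk : Measurable k) (hk1 : ∀ x, k x ≤ 1) :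
      Integrable (fun x => (k x).toReal) μ :=
    integrable_toReal_of_lintegral_ne_top hk.aemeasurable
      (ne_top_of_le_ne_top (measure_ne_top μ Set.univ)
        ((lintegral_mono hk1).trans_eq (by simp)))
  rw [← integral_toReal hf.aemeasurable (lt_top hf1),
    ← integral_toReal hg.aemeasurable (lt_top hg1),
    ← integral_sub (integrable hf hf1) (integrable hg hg1)]
  simpa using norm_integral_le_of_norm_le_const (μ := μ)
    (.of_forall fun x => (Real.norm_eq_abs _).trans_le (h x))

lemma TVBound.prod {μ ν : Measure α} {μ' ν' : Measure β} [IsProbabilityMeasure μ]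
    [IsProbabilityMeasure ν] [IsProbabilityMeasure μ'] [IsProbabilityMeasure ν'] {δ δ' : ℝ}
    (h : TVBound μ ν δ) (h' : TVBound μ' ν' δ') :
    TVBound (μ.prod μ') (ν.prod ν') (δ' + δ) := by
  refine TVBound.trans (ν := μ.prod ν') (fun C hC => ?_) (fun C hC => ?_)
  · rw [prod_apply hC, prod_apply hC]
    exact abs_toReal_lintegral_sub_le μ (measurable_measure_prodMk_left hC)
      (measurable_measure_prodMk_left hC) (fun _ => prob_le_one) (fun _ => prob_le_one)
      fun x => h' _ (measurable_prodMk_left hC)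
  · rw [prod_apply_symm hC, prod_apply_symm hC]
    exact abs_toReal_lintegral_sub_le ν' (measurable_measure_prodMk_right hC)
      (measurable_measure_prodMk_right hC) (fun _ => prob_le_one) (fun _ => prob_le_one)
      fun y => h _ (measurable_prodMk_right hC)

lemma TVBound.pi {μ ν : Measure α} [IsProbabilityMeasure μ] [IsProbabilityMeasure ν] {δ : ℝ}
    (h : TVBound μ ν δ) (n : ℕ) :
    TVBound (Measure.pi fun _ : Fin n => μ) (Measure.pi fun _ : Fin n => ν) (n * δ) := by
  induction n with
  | zero => intro A _; rw [Measure.pi_of_empty, Measure.pi_of_empty]; simp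
  | succ n ih =>
    rw [← (measurePreserving_piFinSuccAbove (fun _ => μ) 0).symm.map_eq,
      ← (measurePreserving_piFinSuccAbove (fun _ => ν) 0).symm.map_eq]
    convert (h.prod ih).map (MeasurableEquiv.piFinSuccAbove (fun _ => α) 0).symm.measurable
      using 1
    push_cast
    ring

end MeasureTheory.Measure

lemma mul_one_sub_rpow_inv_le_inv_sub_one {y p : ℝ} (hy : 0 < y) (hp : 0 < p) :
    p * (1 - y ^ p⁻¹) ≤ y⁻¹ - 1 := by
  have h₁ : 1 - y ^ p⁻¹ ≤ -(p⁻¹ * Real.log y) := by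
    rw [← Real.log_rpow hy]
    linarith [Real.log_le_sub_one_of_pos (Real.rpow_pos_of_pos hy p⁻¹)]
  have h₂ : 1 - y⁻¹ ≤ Real.log y := Real.one_sub_inv_le_log_of_pos hy
  calc p * (1 - y ^ p⁻¹) ≤ p * -(p⁻¹ * Real.log y) := by gcongr
    _ = -Real.log y := by field_simp
    _ ≤ y⁻¹ - 1 := by linarith

/-- If the total variation distance between probability measures `P` and `Q` is at most
`ε_n = 2[1 − (1 − ε²/8)^{1/n}]`, then the total variation distance between the `n`-fold
product measures `P^n` and `Q^n` is at most `ε`. -/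
theorem tv_product_bound
    {X : Type*} [MeasurableSpace X]
    (P Q : Measure X) [IsProbabilityMeasure P] [IsProbabilityMeasure Q]
    (n : ℕ) (hn : 1 ≤ n) (ε : ℝ) (hε : ε ∈ Set.Ioo (0 : ℝ) 1)
    (hTV : ∀ A : Set X, MeasurableSet A →
      |(P A).toReal - (Q A).toReal| ≤ 2 * (1 - (1 - ε ^ 2 / 8) ^ ((1 : ℝ) / n))) :
    ∀ B : Set (Fin n → X), MeasurableSet B →
      |((Measure.pi fun _ : Fin n => P) B).toReal -
        ((Measure.pi fun _ : Fin n => Q) B).toReal| ≤ ε := by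
  obtain ⟨hε₀, hε₁⟩ := hε
  have hy : 0 < 1 - ε ^ 2 / 8 := by nlinarith
  have hinv : (1 - ε ^ 2 / 8)⁻¹ - 1 ≤ ε / 2 := by
    rw [_root_.sub_le_iff_le_add, inv_le_iff_one_le_mul₀ hy]
    nlinarith
  have hn' : (0 : ℝ) < n := by exact_mod_cast hn
  have hnδ : n * (2 * (1 - (1 - ε ^ 2 / 8) ^ ((1 : ℝ) / n))) ≤ ε := by
    rw [one_div, mul_left_comm]
    linarith [mul_one_sub_rpow_inv_le_inv_sub_one hy hn']
  exact fun B hB => ((Measure.TVBound.pi hTV n) B hB).trans hnδ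
end

section
/- If p is a density in the Hölder class Σ(β, L) on ℝ and K is a valid kernel of order β with ∫|u|^β |K(u)| du < ∞, then the convolution bias satisfies ‖p − p ⋆ K_h‖_∞ ≤ (L/⌊β⌋!) h^β ∫ |u|^β |K(u)| du, where K_h(x) = h^{−1} K(x/h). -/
/-!
Subtract from `p (x - h t)` its Taylor polynomial of degree `ℓ = ⌊β⌋` at `x`. By Lagrange's form
of order `ℓ`, the remainder is an increment of `p⁽ℓ⁾` times `(h t)^ℓ / ℓ!`, so the Hölder
condition bounds it by `(L / ℓ!) |h t|^β`. A kernel of order `ℓ` integrates the Taylor polynomial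
to `p x`, so the bias is the integral of `K` against the remainder alone.
-/

open MeasureTheory Finset Set
open scoped Nat

theorem taylorWithinEval_eq_univ_of_contDiff {E : Type*} [NormedAddCommGroup E] [NormedSpace ℝ E]
    {f : ℝ → E} {n : ℕ} (hf : ContDiff ℝ n f) {s : Set ℝ} (hs : UniqueDiffOn ℝ s) {x₀ : ℝ}
    (hx₀ : x₀ ∈ s) (x : ℝ) :
    taylorWithinEval f n s x₀ x = taylorWithinEval f n univ x₀ x := by
  simp only [taylor_within_apply, iteratedDerivWithin_univ]
  refine sum_congr rfl fun k hk => ?_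
  have hkn : (k : WithTop ℕ∞) ≤ n := by exact_mod_cast Nat.lt_succ_iff.mp (mem_range.mp hk)
  rw [iteratedDerivWithin_eq_iteratedDeriv hs ((hf.of_le hkn).contDiffAt) hx₀]

theorem exists_sub_taylorWithinEval_succ_eq {f : ℝ → ℝ} {n : ℕ} (hf : ContDiff ℝ (n + 1) f)
    {x y : ℝ} (hxy : x ≠ y) :
    ∃ ξ ∈ uIoo x y, f y - taylorWithinEval f (n + 1) univ x y =
      (iteratedDeriv (n + 1) f ξ - iteratedDeriv (n + 1) f x) * (y - x) ^ (n + 1) / (n + 1)! := by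
  obtain ⟨ξ, hξ, hrem⟩ := taylor_mean_remainder_lagrange_iteratedDeriv hxy hf.contDiffOn
  refine ⟨ξ, hξ, ?_⟩
  rw [taylorWithinEval_eq_univ_of_contDiff (hf.of_le (by simp)) (uniqueDiffOn_uIcc hxy)
    left_mem_uIcc] at hrem
  rw [taylorWithinEval_succ, iteratedDerivWithin_univ, smul_eq_mul, Nat.factorial_succ]
  rw [Nat.factorial_succ] at hrem
  push_cast at hrem ⊢
  rw [sub_add_eq_sub_sub, hrem]
  ring

theorem abs_sub_taylorWithinEval_le_of_holder {f : ℝ → ℝ} {ℓ : ℕ} {β L : ℝ}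
    (hf : ContDiff ℝ ℓ f) (hℓβ : (ℓ : ℝ) ≤ β) (hL : 0 ≤ L)
    (hHolder : ∀ x x', |iteratedDeriv ℓ f x - iteratedDeriv ℓ f x'| ≤ L * |x - x'| ^ (β - ℓ))
    (x y : ℝ) :
    |f y - taylorWithinEval f ℓ univ x y| ≤ L / ℓ ! * |y - x| ^ β := by
  rcases eq_or_ne x y with rfl | hxy
  · rw [taylorWithinEval_self, sub_self, abs_zero]
    positivity
  cases ℓ with
  | zero => simpa using hHolder y x
  | succ n =>
    obtain ⟨ξ, hξ, hrem⟩ := exists_sub_taylorWithinEval_succ_eq hf hxy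
    have hpos : 0 < |y - x| := abs_pos.mpr (sub_ne_zero.mpr hxy.symm)
    have hincr : |iteratedDeriv (n + 1) f ξ - iteratedDeriv (n + 1) f x| ≤
        L * |y - x| ^ (β - (n + 1 : ℕ)) :=
      (hHolder ξ x).trans <| by
        gcongr L * ?_ ^ _
        exact abs_sub_left_of_mem_uIcc (uIoo_subset_uIcc_self hξ)
    rw [hrem, abs_div, abs_mul, abs_pow, Nat.abs_cast]
    calc |iteratedDeriv (n + 1) f ξ - iteratedDeriv (n + 1) f x| * |y - x| ^ (n + 1) / (n + 1)!
        ≤ L * |y - x| ^ (β - (n + 1 : ℕ)) * |y - x| ^ (n + 1) / (n + 1)! := by gcongr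
      _ = L / (n + 1)! * |y - x| ^ β := by
        rw [mul_assoc, ← Real.rpow_natCast, ← Real.rpow_add hpos, sub_add_cancel]
        ring

theorem taylorWithinEval_univ_sub_mul (f : ℝ → ℝ) (n : ℕ) (x h t : ℝ) :
    taylorWithinEval f n univ x (x - h * t) =
      ∑ k ∈ range (n + 1), iteratedDeriv k f x * (-h) ^ k / k ! * t ^ k := by
  rw [taylor_within_apply]
  refine sum_congr rfl fun k _ => ?_
  rw [iteratedDerivWithin_univ, smul_eq_mul, show x - h * t - x = -h * t by ring, mul_pow]
  ring

theorem abs_sub_taylorWithinEval_sub_mul_le_of_holder {f : ℝ → ℝ} {ℓ : ℕ} {β L h : ℝ}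
    (hf : ContDiff ℝ ℓ f) (hℓβ : (ℓ : ℝ) ≤ β) (hL : 0 ≤ L)
    (hHolder : ∀ x x', |iteratedDeriv ℓ f x - iteratedDeriv ℓ f x'| ≤ L * |x - x'| ^ (β - ℓ))
    (hh : 0 ≤ h) (x t : ℝ) :
    |f (x - h * t) - taylorWithinEval f ℓ univ x (x - h * t)| ≤ L / ℓ ! * h ^ β * |t| ^ β := by
  have := abs_sub_taylorWithinEval_le_of_holder hf hℓβ hL hHolder x (x - h * t)
  rwa [sub_sub_cancel_left, abs_neg, abs_mul, abs_of_nonneg hh, Real.mul_rpow hh (abs_nonneg t),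
    ← mul_assoc] at this

theorem mul_sum_mul_pow (a : ℝ) (s : Finset ℕ) (c : ℕ → ℝ) (u : ℝ) :
    a * ∑ k ∈ s, c k * u ^ k = ∑ k ∈ s, c k * (u ^ k * a) := by
  rw [mul_sum]
  exact sum_congr rfl fun k _ => by ring

/-- A valid kernel of order `β` in the sense of the paper is `IsKernelOfOrder K ⌊β⌋₊`. -/
structure IsKernelOfOrder (K : ℝ → ℝ) (ℓ : ℕ) : Prop where
  integrable : Integrable K
  integral_eq_one : ∫ u, K u = 1
  integrable_pow_mul : ∀ j : ℕ, 1 ≤ j → j ≤ ℓ → Integrable (fun u => u ^ j * K u)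
  integral_pow_mul : ∀ j : ℕ, 1 ≤ j → j ≤ ℓ → ∫ u, u ^ j * K u = 0

namespace IsKernelOfOrder

variable {K : ℝ → ℝ} {ℓ : ℕ}

theorem integrable_pow_mul_of_le (hK : IsKernelOfOrder K ℓ) {k : ℕ} (hk : k ≤ ℓ) :
    Integrable (fun u => u ^ k * K u) := by
  rcases Nat.eq_zero_or_pos k with rfl | hk0
  · simpa using hK.integrable
  · exact hK.integrable_pow_mul k hk0 hk

theorem integrable_mul_sum_pow (hK : IsKernelOfOrder K ℓ) (c : ℕ → ℝ) :
    Integrable (fun u => K u * ∑ k ∈ range (ℓ + 1), c k * u ^ k) := by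
  simp_rw [mul_sum_mul_pow]
  exact integrable_finsetSum _ fun k hk =>
    (hK.integrable_pow_mul_of_le (Nat.lt_succ_iff.mp (mem_range.mp hk))).const_mul (c k)

theorem integral_mul_sum_pow (hK : IsKernelOfOrder K ℓ) (c : ℕ → ℝ) :
    ∫ u, K u * ∑ k ∈ range (ℓ + 1), c k * u ^ k = c 0 := by
  have hk : ∀ k ∈ range (ℓ + 1), k ≤ ℓ := fun k hk => Nat.lt_succ_iff.mp (mem_range.mp hk)
  simp_rw [mul_sum_mul_pow]
  rw [integral_finsetSum _ fun k hk' => (hK.integrable_pow_mul_of_le (hk k hk')).const_mul (c k)]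
  simp_rw [integral_const_mul]
  rw [sum_eq_single_of_mem 0 (by simp) fun k hk' hk0 => ?_]
  · simp [hK.integral_eq_one]
  · rw [hK.integral_pow_mul k (Nat.one_le_iff_ne_zero.mpr hk0) (hk k hk'), mul_zero]

theorem integrable_mul_taylorWithinEval (hK : IsKernelOfOrder K ℓ) (f : ℝ → ℝ) (x h : ℝ) :
    Integrable (fun t => K t * taylorWithinEval f ℓ univ x (x - h * t)) := by
  simpa only [taylorWithinEval_univ_sub_mul] using hK.integrable_mul_sum_pow _

theorem integral_mul_taylorWithinEval (hK : IsKernelOfOrder K ℓ) (f : ℝ → ℝ) (x h : ℝ) :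
    ∫ t, K t * taylorWithinEval f ℓ univ x (x - h * t) = f x := by
  simp only [taylorWithinEval_univ_sub_mul]
  exact (hK.integral_mul_sum_pow _).trans (by simp)

end IsKernelOfOrder

theorem integral_inv_mul_comp_div_mul {h : ℝ} (hh : 0 < h) (K g : ℝ → ℝ) :
    ∫ u, h⁻¹ * K (u / h) * g u = ∫ t, K t * g (h * t) := by
  have hg : ∀ u, h⁻¹ * K (u / h) * g u = h⁻¹ * (K (u / h) * g (h * (u / h))) := fun u => by
    rw [mul_div_cancel₀ u hh.ne', mul_assoc]
  simp_rw [hg, integral_const_mul, Measure.integral_comp_div (fun t => K t * g (h * t)),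
    abs_of_pos hh, smul_eq_mul, inv_mul_cancel_left₀ hh.ne']

theorem kernel_convolution_bias_bound_general
    (β L : ℝ) (hβ : 0 < β)
    (p : ℝ → ℝ)
    (hp : ContDiff ℝ (Nat.floor β) p)
    -- Hölder condition on the ⌊β⌋-th derivative
    (hHolder : ∀ x x' : ℝ,
      |iteratedDeriv (Nat.floor β) p x - iteratedDeriv (Nat.floor β) p x'| ≤
        L * |x - x'| ^ (β - (Nat.floor β : ℝ)))
    (K : ℝ → ℝ) (hKint : Integrable K)
    -- valid kernel of order β
    (hKunit : (∫ u, K u) = 1)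
    (hKmom_int : ∀ j : ℕ, 1 ≤ j → j ≤ Nat.floor β → Integrable (fun u => u ^ j * K u))
    (hKmom : ∀ j : ℕ, 1 ≤ j → j ≤ Nat.floor β → (∫ u, u ^ j * K u) = 0)
    -- finite β-th absolute moment
    (hKβ : Integrable (fun u => |u| ^ β * |K u|))
    (h : ℝ) (hh : 0 < h) :
    ∀ x : ℝ,
      |p x - ∫ u, h⁻¹ * K (u / h) * p (x - u)| ≤
        (L / (Nat.factorial (Nat.floor β) : ℝ)) * h ^ β * ∫ u, |u| ^ β * |K u| := by
  intro x
  set ℓ := Nat.floor β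
  set C := L / ℓ ! * h ^ β
  have hK : IsKernelOfOrder K ℓ := ⟨hKint, hKunit, hKmom_int, hKmom⟩
  have hL : 0 ≤ L := by simpa using (abs_nonneg _).trans (hHolder 1 0)
  let T t := taylorWithinEval p ℓ univ x (x - h * t)
  let R t := p (x - h * t) - T t
  have hR : ∀ t, |K t * R t| ≤ C * (|t| ^ β * |K t|) := fun t => by
    have := abs_sub_taylorWithinEval_sub_mul_le_of_holder hp (Nat.floor_le hβ.le) hL hHolder
      hh.le x t
    rw [abs_mul]
    nlinarith [abs_nonneg (K t)]
  have hR_cont : Continuous R := by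
    simp only [R, T, taylorWithinEval_univ_sub_mul]
    fun_prop
  have hKR : Integrable (fun t => K t * R t) :=
    (hKβ.const_mul C).mono' (hKint.aestronglyMeasurable.mul hR_cont.aestronglyMeasurable)
      (ae_of_all _ hR)
  have hsplit : ∫ t, K t * p (x - h * t) = p x + ∫ t, K t * R t := by
    rw [← hK.integral_mul_taylorWithinEval p x h,
      ← integral_add (hK.integrable_mul_taylorWithinEval p x h) hKR]
    simp only [R, T, mul_sub, add_sub_cancel]
  rw [integral_inv_mul_comp_div_mul hh K (fun u => p (x - u)), hsplit, sub_add_cancel_left, abs_neg,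
    ← integral_const_mul]
  exact norm_integral_le_of_norm_le (f := fun t => K t * R t) (hKβ.const_mul C) (ae_of_all _ hR)

/-- If `p` is a density in the Hölder class `Σ(β, L)` on `ℝ` and `K` is a valid kernel
of order `β` with `∫|u|^β |K(u)| du < ∞`, then the convolution bias satisfies
`‖p − p ⋆ K_h‖_∞ ≤ (L/⌊β⌋!) h^β ∫ |u|^β |K(u)| du`, where `K_h(x) = h⁻¹ K(x/h)`. -/
theorem kernel_convolution_bias_bound
    (β L : ℝ) (hβ : 0 < β) (hL : 0 < L)
    (p : ℝ → ℝ)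
    (hp : ContDiff ℝ (Nat.floor β) p)
    (hpbdd : ∃ M : ℝ, ∀ x, |p x| ≤ M)
    -- Hölder condition on the ⌊β⌋-th derivative
    (hHolder : ∀ x x' : ℝ,
      |iteratedDeriv (Nat.floor β) p x - iteratedDeriv (Nat.floor β) p x'| ≤
        L * |x - x'| ^ (β - (Nat.floor β : ℝ)))
    (K : ℝ → ℝ) (hKmeas : Measurable K) (hKint : Integrable K)
    -- valid kernel of order β
    (hKunit : (∫ u, K u) = 1)
    (hKmom_int : ∀ j : ℕ, 1 ≤ j → j ≤ Nat.floor β → Integrable (fun u => u ^ j * K u))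
    (hKmom : ∀ j : ℕ, 1 ≤ j → j ≤ Nat.floor β → (∫ u, u ^ j * K u) = 0)
    -- finite β-th absolute moment
    (hKβ : Integrable (fun u => |u| ^ β * |K u|))
    (h : ℝ) (hh : 0 < h) :
    ∀ x : ℝ,
      |p x - ∫ u, h⁻¹ * K (u / h) * p (x - u)| ≤
        (L / (Nat.factorial (Nat.floor β) : ℝ)) * h ^ β * ∫ u, |u| ^ β * |K u| :=
  kernel_convolution_bias_bound_general β L hβ p hp hHolder K hKint hKunit hKmom_int hKmom hKβ h hh
end
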